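/- arXiv:1310.2877 — 6 statements merged into one kernel-verified Lean document; each statement's English description precedes it below -/
import Mathlib

section
/- For a prime p and positive integers s and d with d ≤ s, there exist d nonnegative integers r_1, ..., r_d with p^{r_1} + ... + p^{r_d} = s if and only if digits_p(s) ≤ d ≤ s and d ≡ s (mod p-1). -/
/-!
The digit sum `digitSum p s` is the least number of powers of `p` adding up to `s`: the
digit expansion uses exactly that many, and `digitSum p` is subadditive with value `1` on powers
of `p`. Every representation of `s` uses at most `s` powers, and as many as `s` modulo `p - 1`
since `p ≡ 1`. Conversely, splitting one `p ^ (a + 1)` into `p` copies of `p ^ a` raises the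
number of summands by exactly `p - 1`, and this can be done as long as some exponent is positive,
i.e. as long as there are fewer than `s` summands.
-/

/-- The sum of the digits of `n` in base `p`. -/
def digitSum (p n : ℕ) : ℕ := (Nat.digits p n).sum

def powSum (p : ℕ) (l : List ℕ) : ℕ := (l.map (p ^ ·)).sum

@[simp]
lemma powSum_nil (p : ℕ) : powSum p [] = 0 := rfl

@[simp]
lemma powSum_cons (p a : ℕ) (l : List ℕ) : powSum p (a :: l) = p ^ a + powSum p l := rfl

@[simp]
lemma powSum_append (p : ℕ) (l₁ l₂ : List ℕ) :
    powSum p (l₁ ++ l₂) = powSum p l₁ + powSum p l₂ := by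
  simp [powSum]

@[simp]
lemma powSum_replicate (p n a : ℕ) : powSum p (List.replicate n a) = n * p ^ a := by
  simp [powSum]

lemma powSum_map_succ (p : ℕ) (l : List ℕ) : powSum p (l.map (· + 1)) = p * powSum p l := by
  induction l with
  | nil => simp
  | cons a l ih => simp [ih, pow_succ, mul_add, mul_comm]

lemma powSum_ofFn (p : ℕ) {d : ℕ} (r : Fin d → ℕ) : powSum p (List.ofFn r) = ∑ i, p ^ r i := by
  simp [powSum, List.map_ofFn, List.sum_ofFn, Function.comp_def]

@[simp]
lemma digitSum_zero (p : ℕ) : digitSum p 0 = 0 := by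
  simp [digitSum]

section

variable {p : ℕ}

lemma digitSum_add_mul (hp : 1 < p) {r : ℕ} (hr : r < p) (q : ℕ) :
    digitSum p (r + p * q) = r + digitSum p q := by
  by_cases h : r ≠ 0 ∨ q ≠ 0
  · simp [digitSum, Nat.digits_add p hp r q hr h]
  · obtain ⟨rfl, rfl⟩ : r = 0 ∧ q = 0 := by tauto
    simp

lemma digitSum_one (hp : 1 < p) : digitSum p 1 = 1 := by
  simpa using digitSum_add_mul hp hp 0

lemma digitSum_pow (hp : 1 < p) (a : ℕ) : digitSum p (p ^ a) = 1 := by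
  induction a with
  | zero => exact digitSum_one hp
  | succ a ih => simpa [pow_succ', ih] using digitSum_add_mul hp (by omega : 0 < p) (p ^ a)

lemma digitSum_add_le (hp : 1 < p) (m n : ℕ) :
    digitSum p (m + n) ≤ digitSum p m + digitSum p n := by
  induction hN : m + n using Nat.strong_induction_on generalizing m n with
  | _ N ih =>
    subst hN
    rcases Nat.eq_zero_or_pos (m + n) with hmn | hmn
    · obtain ⟨rfl, rfl⟩ : m = 0 ∧ n = 0 := by omega
      simp
    obtain ⟨a, q, ha, rfl⟩ : ∃ a q, a < p ∧ m = a + p * q :=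
      ⟨m % p, m / p, Nat.mod_lt m (by omega), (Nat.mod_add_div m p).symm⟩
    obtain ⟨b, r, hb, rfl⟩ : ∃ b r, b < p ∧ n = b + p * r :=
      ⟨n % p, n / p, Nat.mod_lt n (by omega), (Nat.mod_add_div n p).symm⟩
    have hq : 2 * q ≤ p * q := Nat.mul_le_mul_right q hp
    have hr : 2 * r ≤ p * r := Nat.mul_le_mul_right r hp
    rw [digitSum_add_mul hp ha, digitSum_add_mul hp hb]
    by_cases hc : a + b < p
    · rw [show a + p * q + (b + p * r) = (a + b) + p * (q + r) by ring, digitSum_add_mul hp hc]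
      have := ih (q + r) (by omega) q r rfl
      omega
    · rw [show a + p * q + (b + p * r) = (a + b - p) + p * (q + r + 1) by
          rw [mul_add, mul_add, mul_one]; omega, digitSum_add_mul hp (by omega)]
      have h₁ := ih (q + r + 1) (by omega) (q + r) 1 rfl
      have h₂ := ih (q + r) (by omega) q r rfl
      rw [digitSum_one hp] at h₁
      omega

lemma digitSum_powSum_le (hp : 1 < p) (l : List ℕ) : digitSum p (powSum p l) ≤ l.length := by
  induction l with
  | nil => simp
  | cons a l ih =>
    calc digitSum p (powSum p (a :: l))
        ≤ digitSum p (p ^ a) + digitSum p (powSum p l) := digitSum_add_le hp _ _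
      _ ≤ (a :: l).length := by simp [digitSum_pow hp]; omega

lemma exists_length_eq_digitSum (hp : 1 < p) (n : ℕ) :
    ∃ l : List ℕ, l.length = digitSum p n ∧ powSum p l = n := by
  induction n using Nat.strong_induction_on with
  | _ n ih =>
    rcases Nat.eq_zero_or_pos n with rfl | hn
    · exact ⟨[], by simp⟩
    obtain ⟨l, hl, hsum⟩ := ih (n / p) (Nat.div_lt_self hn hp)
    have hdigits : digitSum p n = n % p + digitSum p (n / p) := by
      conv_lhs => rw [← Nat.mod_add_div n p]
      exact digitSum_add_mul hp (Nat.mod_lt n (by omega)) _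
    refine ⟨List.replicate (n % p) 0 ++ l.map (· + 1), by simp [hl, hdigits], ?_⟩
    simp [powSum_map_succ, hsum, Nat.mod_add_div]

lemma length_le_powSum (hp : 0 < p) (l : List ℕ) : l.length ≤ powSum p l := by
  induction l with
  | nil => simp
  | cons a l ih =>
    have := Nat.one_le_pow a p hp
    simp only [powSum_cons, List.length_cons]
    omega

lemma powSum_modEq_length (hp : 1 ≤ p) (l : List ℕ) : powSum p l ≡ l.length [MOD p - 1] := by
  induction l with
  | nil => rfl
  | cons a l ih =>
    simpa [add_comm] using ((Nat.modEq_sub hp).pow a).add ih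

lemma exists_length_add_sub_one (hp : 1 < p) :
    ∀ l : List ℕ, l.length < powSum p l →
      ∃ l' : List ℕ, l'.length = l.length + (p - 1) ∧ powSum p l' = powSum p l
  | [] => by simp
  | 0 :: l => fun h => by
    obtain ⟨l', hlen, hsum⟩ := exists_length_add_sub_one hp l (by simp at h; omega)
    exact ⟨0 :: l', by simp [hlen]; omega, by simp [hsum]⟩
  | (a + 1) :: l => fun _ =>
    ⟨List.replicate p a ++ l, by simp; omega, by simp [pow_succ']⟩

lemma exists_length_add_mul_sub_one (hp : 1 < p) (l : List ℕ) (k : ℕ)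
    (hk : l.length + k * (p - 1) ≤ powSum p l) :
    ∃ l' : List ℕ, l'.length = l.length + k * (p - 1) ∧ powSum p l' = powSum p l := by
  induction k with
  | zero => exact ⟨l, by simp, rfl⟩
  | succ k ih =>
    obtain ⟨l', hlen, hsum⟩ := ih (le_trans (by gcongr; omega) hk)
    obtain ⟨l'', hlen', hsum'⟩ :=
      exists_length_add_sub_one hp l' (by rw [hlen, hsum]; rw [add_mul] at hk; omega)
    exact ⟨l'', by rw [hlen', hlen]; ring, hsum'.trans hsum⟩

theorem exists_powSum_eq_iff (hp : 1 < p) {s d : ℕ} :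
    (∃ l : List ℕ, l.length = d ∧ powSum p l = s) ↔
      digitSum p s ≤ d ∧ d ≤ s ∧ d ≡ s [MOD p - 1] := by
  constructor
  · rintro ⟨l, rfl, rfl⟩
    exact ⟨digitSum_powSum_le hp l, length_le_powSum (by omega) l,
      (powSum_modEq_length hp.le l).symm⟩
  · rintro ⟨hdigit, hds, hmod⟩
    obtain ⟨l, hlen, rfl⟩ := exists_length_eq_digitSum hp s
    have hmod' : l.length ≡ d [MOD p - 1] := (powSum_modEq_length hp.le l).symm.trans hmod.symm
    obtain ⟨k, hk⟩ := (Nat.modEq_iff_dvd' (hlen ▸ hdigit)).mp hmod'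
    obtain ⟨l', hlen', hsum⟩ :=
      exists_length_add_mul_sub_one hp l k (by rw [mul_comm, ← hk]; omega)
    exact ⟨l', by rw [hlen', mul_comm, ← hk]; omega, hsum⟩

end

lemma exists_fin_sum_pow_eq_iff (p s d : ℕ) :
    (∃ r : Fin d → ℕ, ∑ i, p ^ r i = s) ↔ ∃ l : List ℕ, l.length = d ∧ powSum p l = s := by
  constructor
  · rintro ⟨r, hr⟩
    exact ⟨List.ofFn r, List.length_ofFn, by rw [powSum_ofFn, hr]⟩
  · rintro ⟨l, rfl, hl⟩
    exact ⟨l.get, by rw [← powSum_ofFn, List.ofFn_get, hl]⟩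

theorem sum_of_d_pow_iff_general (p s d : ℕ) (hp : Nat.Prime p) :
    (∃ r : Fin d → ℕ, ∑ i, p ^ r i = s) ↔
      (digitSum p s ≤ d ∧ d ≤ s ∧ d ≡ s [MOD p - 1]) := by
  rw [exists_fin_sum_pow_eq_iff, exists_powSum_eq_iff hp.one_lt]

/-- For a prime `p` and positive integers `s` and `d` with `d ≤ s`, `s` can be written as a
sum of `d` powers of `p` iff `digits_p(s) ≤ d ≤ s` and `d ≡ s (mod p-1)`. -/
theorem sum_of_d_pow_iff (p s d : ℕ) (hp : Nat.Prime p) (hs : 0 < s) (hd : 0 < d)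
    (hds : d ≤ s) :
    (∃ r : Fin d → ℕ, ∑ i, p ^ r i = s) ↔
      (digitSum p s ≤ d ∧ d ≤ s ∧ d ≡ s [MOD p - 1]) :=
  sum_of_d_pow_iff_general p s d hp
end

section
/- For integers s ≥ 2, the greatest common divisor of the binomial coefficients C(s,k) for 0 < k < s equals p if s is a power of a prime p, and equals 1 otherwise. -/
/-!
Since `C(s, 1) = s`, the gcd divides `s`. If `s = p ^ r`, every `C(s, k)` with `0 < k < s` is
divisible by `p`, while `C(p ^ r, p ^ (r - 1))` is not divisible by `p ^ 2` (Kummer). Otherwise,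
for each prime `q ∣ s` write `s = q ^ a * m` with `q ∤ m` and `m > 1`; by Lucas,
`C(s, q ^ a) ≡ m [MOD q]`, so `q` does not divide the gcd.
-/

open Finset

namespace Nat

theorem choose_prime_pow_mul_modEq {p : ℕ} [Fact p.Prime] (a m : ℕ) :
    (p ^ a * m).choose (p ^ a) ≡ m [MOD p] := by
  induction a with
  | zero => simp only [pow_zero, one_mul, choose_one_right]; rfl
  | succ a ih =>
    rw [pow_succ', mul_assoc]
    exact Choose.choose_mul_mul_modEq_choose_nat.trans ih

theorem factorization_choose_prime_pow_succ {p : ℕ} (hp : p.Prime) (n : ℕ) :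
    ((p ^ (n + 1)).choose (p ^ n)).factorization p = 1 := by
  rw [factorization_choose_prime_pow hp (pow_le_pow_right₀ hp.one_le n.le_succ)
    (pow_ne_zero _ hp.ne_zero), factorization_pow_self hp]
  omega

theorem gcd_choose_dvd_choose {n k : ℕ} (hk : 0 < k) (hkn : k < n) :
    (Ioo 0 n).gcd (fun k => n.choose k) ∣ n.choose k :=
  Finset.gcd_dvd (mem_Ioo.2 ⟨hk, hkn⟩)

theorem gcd_choose_dvd_self {n : ℕ} (hn : 1 < n) : (Ioo 0 n).gcd (fun k => n.choose k) ∣ n := by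
  simpa using gcd_choose_dvd_choose one_pos hn

theorem gcd_choose_prime_pow {p r : ℕ} (hp : p.Prime) (hr : r ≠ 0) :
    (Ioo 0 (p ^ r)).gcd (fun k => (p ^ r).choose k) = p := by
  obtain ⟨n, rfl⟩ := exists_eq_succ_of_ne_zero hr
  have hlt : p ^ n < p ^ (n + 1) := pow_lt_pow_right₀ hp.one_lt n.lt_succ_self
  obtain ⟨i, -, hgi⟩ :=
    (dvd_prime_pow hp).1 (gcd_choose_dvd_self ((one_le_pow _ _ hp.pos).trans_lt hlt))
  have hp_dvd : p ∣ p ^ i := hgi ▸ Finset.dvd_gcd fun k hk =>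
    hp.dvd_choose_pow (mem_Ioo.1 hk).1.ne' (mem_Ioo.1 hk).2.ne
  have hi_le : i ≤ 1 := by
    rw [← factorization_choose_prime_pow_succ hp n,
      ← hp.pow_dvd_iff_le_factorization (choose_pos hlt.le).ne', ← hgi]
    exact gcd_choose_dvd_choose (pow_pos hp.pos n) hlt
  have hi_pos : i ≠ 0 := by
    rintro rfl
    exact hp.ne_one (dvd_one.1 (pow_zero p ▸ hp_dvd))
  rw [hgi, show i = 1 by omega, pow_one]

theorem prime_not_dvd_gcd_choose {s q : ℕ} (hs : s ≠ 0) (hq : q.Prime) (hsq : ∀ a, s ≠ q ^ a) :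
    ¬ q ∣ (Ioo 0 s).gcd (fun k => s.choose k) := by
  have : Fact q.Prime := ⟨hq⟩
  intro hqg
  obtain ⟨a, m, hqm, rfl⟩ := exists_eq_pow_mul_and_not_dvd hs q hq.ne_one
  have hm : 1 < m := by
    rcases m with _ | _ | m
    · simp at hs
    · exact absurd (mul_one _) (hsq a)
    · omega
  have hlt : q ^ a < q ^ a * m := lt_mul_of_one_lt_right (pow_pos hq.pos a) hm
  have hq_choose : q ∣ (q ^ a * m).choose (q ^ a) :=
    hqg.trans (gcd_choose_dvd_choose (pow_pos hq.pos a) hlt)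
  have hm_zero : m ≡ 0 [MOD q] :=
    (choose_prime_pow_mul_modEq a m).symm.trans (modEq_zero_iff_dvd.2 hq_choose)
  exact hqm (modEq_zero_iff_dvd.1 hm_zero)

end Nat

/-- For `s ≥ 2`, the gcd of the binomial coefficients `C(s,k)` for `0 < k < s` equals `p`
when `s` is a power of a prime `p`, and equals `1` otherwise. -/
theorem gcd_choose_eq (s : ℕ) (hs : 2 ≤ s) :
    (∀ p r : ℕ, Nat.Prime p → s = p ^ r →
        Finset.gcd (Finset.Ioo 0 s) (fun k => s.choose k) = p) ∧
    ((¬ ∃ p r : ℕ, Nat.Prime p ∧ s = p ^ r) →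
        Finset.gcd (Finset.Ioo 0 s) (fun k => s.choose k) = 1) := by
  refine ⟨fun p r hp hs_eq => ?_, fun hs_npp => ?_⟩
  · subst hs_eq
    refine Nat.gcd_choose_prime_pow hp ?_
    rintro rfl
    simp at hs
  · exact Nat.eq_one_iff_not_exists_prime_dvd.2 fun q hq =>
      Nat.prime_not_dvd_gcd_choose (by omega) hq fun a ha => hs_npp ⟨q, a, hq, ha⟩
end

section
/- If λ is a positive integer that is not a power of a prime p, then there exist positive integers k, ℓ with k + ℓ = λ such that the binomial coefficient C(λ, k) is prime to p. -/
/-- If `λ` is a positive integer which is not a power of the prime `p`, then `λ = k + ℓ` for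
some positive integers `k, ℓ` such that the binomial coefficient `C(λ,k)` is prime to `p`. -/
theorem exists_choose_coprime (p lam : ℕ) (hp : Nat.Prime p) (hlam : 0 < lam)
    (h : ∀ r : ℕ, lam ≠ p ^ r) :
    ∃ k ℓ : ℕ, 0 < k ∧ 0 < ℓ ∧ k + ℓ = lam ∧ Nat.Coprime (lam.choose k) p := by
  have : Fact p.Prime := ⟨hp⟩
  by_contra! hdvd
  refine h _ (Choose.eq_pow_multiplicity_of_choose_modEq_zero_nat hlam fun i hi => ?_)
  obtain ⟨hi₁, hi₂⟩ := Finset.mem_Icc.mp hi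
  rw [Nat.modEq_zero_iff_dvd, hp.dvd_iff_not_coprime, Nat.coprime_comm]
  exact hdvd i (lam - i) hi₁ (by omega) (by omega)
end

section
/- Let p be a prime and s a positive integer. Define f(0) = digits_p(s) and for n with digits_p(s) + n(p-1) < s, if s admits a decomposition into digits_p(s)+n(p-1) powers of p then it admits one into digits_p(s)+(n+1)(p-1) powers of p. Consequently, for every m in the set {n : n ≡ s mod (p-1), digits_p(s) ≤ n ≤ s}, s admits a decomposition as a sum of m powers of p. -/
/-- `s` admits a decomposition as a sum of `m` powers of `p`: a multiset of `m` exponents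
whose associated powers of `p` sum to `s`. -/
def HasDecomposition (p s m : ℕ) : Prop :=
  ∃ l : Multiset ℕ, Multiset.card l = m ∧ (l.map (fun r => p ^ r)).sum = s

/-!
Reading off the base-`p` digits of `s` gives a decomposition into `digits_p(s)` powers of `p`.
As long as a decomposition has fewer than `s` terms, some term `p ^ (k + 1)` is not `1`, and
replacing it by `p` copies of `p ^ k` adds exactly `p - 1` terms. Every admissible `m` is
reached this way, since `digits_p(s) ≡ s (mod p - 1)` because `p ≡ 1 (mod p - 1)`.
-/

theorem hasDecomposition_self (p n : ℕ) : HasDecomposition p n n :=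
  ⟨Multiset.replicate n 0, Multiset.card_replicate n 0, by simp⟩

namespace HasDecomposition

variable {p a b s m k : ℕ}

theorem add (ha : HasDecomposition p a m) (hb : HasDecomposition p b k) :
    HasDecomposition p (a + b) (m + k) := by
  obtain ⟨l, rfl, rfl⟩ := ha
  obtain ⟨l', rfl, rfl⟩ := hb
  exact ⟨l + l', Multiset.card_add l l', by rw [Multiset.map_add, Multiset.sum_add]⟩

theorem mul_left (h : HasDecomposition p a m) : HasDecomposition p (p * a) m := by
  obtain ⟨l, rfl, rfl⟩ := h
  refine ⟨l.map (· + 1), Multiset.card_map _ _, ?_⟩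
  simp only [Multiset.map_map, Function.comp_def, pow_succ', Multiset.sum_map_mul_left]

theorem add_sub_one (hp : 0 < p) (hm : m < s) (h : HasDecomposition p s m) :
    HasDecomposition p s (m + (p - 1)) := by
  obtain ⟨l, rfl, rfl⟩ := h
  have hpos : ∃ r ∈ l, r ≠ 0 := by
    by_contra! hzero
    rw [Multiset.eq_replicate_card.mpr hzero] at hm
    simp at hm
  obtain ⟨r, hmem, hr⟩ := hpos
  obtain ⟨k, rfl⟩ := Nat.exists_eq_succ_of_ne_zero hr
  obtain ⟨rest, rfl⟩ := Multiset.exists_cons_of_mem hmem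
  refine ⟨Multiset.replicate p k + rest, ?_, ?_⟩
  · simp only [Multiset.card_add, Multiset.card_replicate, Multiset.card_cons]
    omega
  · simp [pow_succ, mul_comm]

end HasDecomposition

theorem hasDecomposition_ofDigits (p : ℕ) (L : List ℕ) :
    HasDecomposition p (Nat.ofDigits p L) L.sum := by
  induction L with
  | nil => exact hasDecomposition_self p 0
  | cons d L ih => exact (hasDecomposition_self p d).add ih.mul_left

theorem hasDecomposition_digitSum (p s : ℕ) : HasDecomposition p s (digitSum p s) := by
  have h := hasDecomposition_ofDigits p (Nat.digits p s)
  rwa [Nat.ofDigits_digits] at h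

theorem digitSum_modEq {p : ℕ} (hp : 0 < p) (s : ℕ) : digitSum p s ≡ s [MOD p - 1] := by
  have := Nat.ofDigits_modEq' p 1 (p - 1) (Nat.modEq_sub hp) (Nat.digits p s)
  rw [Nat.ofDigits_digits, Nat.ofDigits_one] at this
  exact this.symm

theorem hasDecomposition_digitSum_add_mul {p s : ℕ} (hp : 1 < p) (n : ℕ)
    (hn : digitSum p s + n * (p - 1) ≤ s) :
    HasDecomposition p s (digitSum p s + n * (p - 1)) := by
  induction n with
  | zero => simpa using hasDecomposition_digitSum p s
  | succ n ih =>
    rw [add_one_mul, ← add_assoc] at hn ⊢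
    have hlt : digitSum p s + n * (p - 1) < s := by omega
    exact (ih hlt.le).add_sub_one (by omega) hlt

theorem decomposition_steps_general (p s : ℕ) (hp : Nat.Prime p) :
    (∀ n : ℕ, digitSum p s + n * (p - 1) < s →
        HasDecomposition p s (digitSum p s + n * (p - 1)) →
        HasDecomposition p s (digitSum p s + (n + 1) * (p - 1))) ∧
    (∀ m : ℕ, m ≡ s [MOD p - 1] → digitSum p s ≤ m → m ≤ s → HasDecomposition p s m) := by
  refine ⟨fun n hlt h => ?_, fun m hmod hge hle => ?_⟩
  · rw [add_one_mul, ← add_assoc]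
    exact h.add_sub_one hp.pos hlt
  · obtain ⟨n, hn⟩ : (p - 1) ∣ m - digitSum p s :=
      (Nat.modEq_iff_dvd' hge).mp (digitSum_modEq hp.pos s |>.trans hmod.symm)
    obtain rfl : m = digitSum p s + n * (p - 1) := by
      rw [mul_comm] at hn
      omega
    exact hasDecomposition_digitSum_add_mul hp.one_lt n hle

/-- If `digits_p(s) + n(p-1) < s` and `s` decomposes into `digits_p(s) + n(p-1)` powers of
`p`, then it decomposes into `digits_p(s) + (n+1)(p-1)` powers of `p`.  Consequently, for
every `m` with `m ≡ s (mod p-1)` and `digits_p(s) ≤ m ≤ s`, `s` decomposes as a sum of `m`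
powers of `p`. -/
theorem decomposition_steps (p s : ℕ) (hp : Nat.Prime p) (hs : 0 < s) :
    (∀ n : ℕ, digitSum p s + n * (p - 1) < s →
        HasDecomposition p s (digitSum p s + n * (p - 1)) →
        HasDecomposition p s (digitSum p s + (n + 1) * (p - 1))) ∧
    (∀ m : ℕ, m ≡ s [MOD p - 1] → digitSum p s ≤ m → m ≤ s → HasDecomposition p s m) :=
  decomposition_steps_general p s hp
end

section
/- Let s ≥ 2 be an integer that is not a prime power. Then the gcd over all pairs (k, s-k) with 0 < k < s of the binomial coefficients C(s,k) equals 1; equivalently, for every prime p, some C(s,k) with 0 < k < s is prime to p. -/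
/-!
For a prime `p`, take `k = p ^ m` with `m = log p s`, the largest power of `p` not exceeding `s`.
Since `p ^ i ∣ k` for every `i ≤ m`, adding `k` and `s - k` in base `p` produces no carry, so
by Kummer's theorem `p ∤ C(s, k)`; and `k < s` exactly because `s` is not a power of `p`.
-/

open Nat Finset

theorem Nat.Prime.not_dvd_choose_of_pow_log_dvd {p s k : ℕ} (hp : p.Prime) (hks : k ≤ s)
    (hdvd : p ^ log p s ∣ k) : ¬ p ∣ s.choose k := by
  rw [← emultiplicity_eq_zero, hp.emultiplicity_choose hks (lt_add_one _), Nat.cast_eq_zero,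
    Finset.card_eq_zero, filter_eq_empty_iff]
  intro i hi
  have hki : k % p ^ i = 0 :=
    Nat.mod_eq_zero_of_dvd ((pow_dvd_pow p (Nat.le_of_lt_add_one (mem_Ico.mp hi).2)).trans hdvd)
  have := Nat.mod_lt (s - k) (pow_pos hp.pos i)
  omega

theorem Nat.Prime.exists_not_dvd_choose_of_ne_pow {p s : ℕ} (hp : p.Prime) (hs : s ≠ 0)
    (hpow : ∀ r, s ≠ p ^ r) : ∃ k, 0 < k ∧ k < s ∧ ¬ p ∣ s.choose k :=
  ⟨p ^ log p s, pow_pos hp.pos _, (pow_log_le_self p hs).lt_of_ne (hpow _).symm,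
    hp.not_dvd_choose_of_pow_log_dvd (pow_log_le_self p hs) dvd_rfl⟩

theorem Finset.gcd_eq_one_of_forall_prime_exists_not_dvd {ι : Type*} {t : Finset ι} {f : ι → ℕ}
    (h : ∀ p : ℕ, p.Prime → ∃ i ∈ t, ¬ p ∣ f i) : t.gcd f = 1 :=
  Nat.eq_one_iff_not_exists_prime_dvd.mpr fun p hp hdvd =>
    let ⟨_, hi, hndvd⟩ := h p hp
    hndvd (hdvd.trans (gcd_dvd hi))

/-- If `s ≥ 2` is not a prime power, then the gcd of the binomial coefficients `C(s,k)` for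
`0 < k < s` equals `1`; equivalently, for every prime `p` some `C(s,k)` with `0 < k < s` is
prime to `p`. -/
theorem gcd_choose_eq_one (s : ℕ) (hs : 2 ≤ s)
    (h : ¬ ∃ q r : ℕ, Nat.Prime q ∧ 1 ≤ r ∧ s = q ^ r) :
    Finset.gcd (Finset.Ioo 0 s) (fun k => s.choose k) = 1 ∧
    ∀ p : ℕ, Nat.Prime p → ∃ k : ℕ, 0 < k ∧ k < s ∧ Nat.Coprime (s.choose k) p := by
  have key (p : ℕ) (hp : p.Prime) : ∃ k, 0 < k ∧ k < s ∧ ¬ p ∣ s.choose k := by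
    refine hp.exists_not_dvd_choose_of_ne_pow (by omega) fun r heq => ?_
    rcases r with _ | r
    · simp only [pow_zero] at heq
      omega
    · exact h ⟨p, r + 1, hp, le_add_self, heq⟩
  refine ⟨gcd_eq_one_of_forall_prime_exists_not_dvd fun p hp => ?_, fun p hp => ?_⟩
  · obtain ⟨k, hk0, hks, hndvd⟩ := key p hp
    exact ⟨k, mem_Ioo.mpr ⟨hk0, hks⟩, hndvd⟩
  · obtain ⟨k, hk0, hks, hndvd⟩ := key p hp
    exact ⟨k, hk0, hks, (hp.coprime_iff_not_dvd.mpr hndvd).symm⟩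
end

section
/- Let R be a commutative ring and s ≥ 2 an integer. If s is not a prime power, then the cokernel of the map ⊕_{0<k<s} Γ^k(R) ⊗ Γ^{s-k}(R) → Γ^s(R) induced by the divided-power (shuffle) multiplication is zero; if s = p^r for a prime p, this cokernel is isomorphic to R/pR. -/
open TensorProduct PiTensorProduct

/-- The action of a permutation `σ` on the `n`-th tensor power of `M`. -/
noncomputable def permMap (R : Type*) [CommRing R] (M : Type*) [AddCommGroup M] [Module R M]
    {n : ℕ} (σ : Equiv.Perm (Fin n)) :
    (⨂[R] _ : Fin n, M) ≃ₗ[R] ⨂[R] _ : Fin n, M :=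
  PiTensorProduct.reindex R (fun _ => M) σ

/-- `Γ^n(M)`: the divided power functor, i.e. the submodule of symmetric tensors in the
`n`-th tensor power of `M`. -/
noncomputable def GammaSub (R : Type*) [CommRing R] (M : Type*) [AddCommGroup M] [Module R M]
    (n : ℕ) : Submodule R (⨂[R] _ : Fin n, M) :=
  ⨅ σ : Equiv.Perm (Fin n),
    LinearMap.ker ((permMap R M σ).toLinearMap - LinearMap.id)

/-- The set of `(a,b)`-shuffles in the symmetric group on `a + b` letters. -/
def shuffles (a b : ℕ) : Finset (Equiv.Perm (Fin (a + b))) :=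
  Finset.univ.filter (fun σ =>
    (∀ i j : Fin a, i < j → σ (Fin.castAdd b i) < σ (Fin.castAdd b j)) ∧
    (∀ i j : Fin b, i < j → σ (Fin.natAdd a i) < σ (Fin.natAdd a j)))

/-- The shuffle multiplication `(⊗^a M) ⊗ (⊗^b M) → ⊗^(a+b) M`: the sum of all
`(a,b)`-shuffles acting on tensor powers. -/
noncomputable def shuffleMul (R : Type*) [CommRing R] (M : Type*) [AddCommGroup M]
    [Module R M] (a b : ℕ) :
    ((⨂[R] _ : Fin a, M) ⊗[R] (⨂[R] _ : Fin b, M)) →ₗ[R] ⨂[R] _ : Fin (a + b), M :=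
  ∑ σ ∈ shuffles a b,
    ((permMap R M σ).toLinearMap ∘ₗ
      ((PiTensorProduct.reindex R (fun _ => M) finSumFinEquiv).toLinearMap ∘ₗ
        (PiTensorProduct.tmulEquiv R M).toLinearMap))

/-- The divided power multiplication `⊗^k(R) → ⊗^{s-k}(R) → ⊗^s(R)` (for `k ≤ s`), as a
bilinear map. -/
noncomputable def mulInto (R : Type*) [CommRing R] (s k : ℕ) (hk : k ≤ s) :
    (⨂[R] _ : Fin k, R) →ₗ[R] (⨂[R] _ : Fin (s - k), R) →ₗ[R] ⨂[R] _ : Fin s, R :=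
  TensorProduct.curry
    ((PiTensorProduct.reindex R (fun _ => R)
        (finCongr (by omega : k + (s - k) = s))).toLinearMap ∘ₗ shuffleMul R R k (s - k))

/-- The image in `⊗^s(R)` of `⊕_{0<k<s} Γ^k(R) ⊗ Γ^{s-k}(R)` under the divided power
multiplication. -/
noncomputable def divMulImage (R : Type*) [CommRing R] (s : ℕ) :
    Submodule R (⨂[R] _ : Fin s, R) :=
  ⨆ k : Fin (s + 1), ⨆ _ : 0 < k.val ∧ k.val < s,
    Submodule.map₂ (mulInto R s k.val (Nat.lt_succ_iff.mp k.isLt))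
      (GammaSub R R k.val) (GammaSub R R (s - k.val))

noncomputable instance (R : Type*) [CommRing R] (M : Type*) [AddCommGroup M] [Module R M]
    (n : ℕ) : AddCommGroup (⨂[R] _ : Fin n, M) :=
  PiTensorProduct.instAddCommGroup

/-- The cokernel of the map `⊕_{0<k<s} Γ^k(R) ⊗ Γ^{s-k}(R) → Γ^s(R)` induced by the
divided power multiplication. -/
noncomputable def divMulCoker (R : Type*) [CommRing R] (s : ℕ) :=
  (GammaSub R R s) ⧸ ((divMulImage R s).comap (GammaSub R R s).subtype)

noncomputable instance (R : Type*) [CommRing R] (s : ℕ) : AddCommGroup (divMulCoker R s) :=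
  inferInstanceAs (AddCommGroup
    ((GammaSub R R s) ⧸ ((divMulImage R s).comap (GammaSub R R s).subtype)))

noncomputable instance (R : Type*) [CommRing R] (s : ℕ) : Module R (divMulCoker R s) :=
  inferInstanceAs (Module R
    ((GammaSub R R s) ⧸ ((divMulImage R s).comap (GammaSub R R s).subtype)))

/-!
Over `M = R` every permutation acts trivially on `⨂^n R ≅ R`, so `Γ^n(R)` is the whole tensor
power, and on the generator `1 ⊗ 1` the shuffle product picks up one copy of `1` per
`(k, s - k)`-shuffle, i.e. `C(s, k)` of them. The cokernel is therefore `R` modulo the ideal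
generated by the `C(s, k)` with `0 < k < s`, which is the ideal generated by their gcd; that gcd
is `p` when `s = p ^ r` and `1` when `s` is not a prime power.
-/

open Finset

lemma Finset.natCast_gcd {ι : Type*} (t : Finset ι) (f : ι → ℕ) :
    ((t.gcd f : ℕ) : ℤ) = t.gcd (fun i ↦ (f i : ℤ)) := by
  classical
  induction t using Finset.induction_on with
  | empty => simp
  | insert i t _ ih =>
    rw [gcd_insert, gcd_insert, ← ih, ← Int.coe_gcd, Int.gcd_natCast_natCast]
    rfl

lemma Ideal.span_natCast_image_eq_span_gcd {R ι : Type*} [CommRing R] (t : Finset ι)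
    (f : ι → ℕ) :
    Ideal.span ((fun i ↦ (f i : R)) '' t) = Ideal.span {((t.gcd f : ℕ) : R)} := by
  refine le_antisymm (Ideal.span_le.mpr ?_) (Ideal.span_le.mpr ?_)
  · rintro _ ⟨i, hi, rfl⟩
    exact Ideal.mem_span_singleton.mpr (Nat.cast_dvd_cast (gcd_dvd hi))
  · obtain ⟨g, hg⟩ := t.gcd_eq_sum_mul (fun i ↦ (f i : ℤ))
    have hbezout : ((t.gcd f : ℕ) : R) = ∑ i ∈ t, (f i : R) * (g i : R) := by
      simpa using congrArg (Int.cast : ℤ → R) ((t.natCast_gcd f).trans hg)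
    rw [Set.singleton_subset_iff, SetLike.mem_coe, hbezout]
    exact Ideal.sum_mem _ fun i hi ↦ Ideal.mul_mem_right _ _ (Ideal.subset_span ⟨i, hi, rfl⟩)

section Shuffles

variable {a b : ℕ}

lemma mem_shuffles {σ : Equiv.Perm (Fin (a + b))} :
    σ ∈ shuffles a b ↔
      StrictMono (σ ∘ Fin.castAdd b) ∧ StrictMono (σ ∘ Fin.natAdd a) := by
  simp [shuffles, StrictMono]

lemma range_comp_natAdd_eq_compl (σ : Equiv.Perm (Fin (a + b))) :
    Set.range (σ ∘ Fin.natAdd a) = (Set.range (σ ∘ Fin.castAdd b))ᶜ := by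
  rw [Set.range_comp, Set.range_comp, ← Set.image_compl_eq σ.bijective]
  congr 1
  ext i
  induction i using Fin.addCases <;> simp [Fin.ext_iff] <;> intro x <;> omega

lemma eq_of_mem_shuffles_of_range_castAdd_eq {σ τ : Equiv.Perm (Fin (a + b))}
    (hσ : σ ∈ shuffles a b) (hτ : τ ∈ shuffles a b)
    (h : Set.range (σ ∘ Fin.castAdd b) = Set.range (τ ∘ Fin.castAdd b)) : σ = τ := by
  rw [mem_shuffles] at hσ hτ
  have hcast : σ ∘ Fin.castAdd b = τ ∘ Fin.castAdd b := (hσ.1.range_inj hτ.1).mp h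
  have hnat : σ ∘ Fin.natAdd a = τ ∘ Fin.natAdd a := (hσ.2.range_inj hτ.2).mp <| by
    rw [range_comp_natAdd_eq_compl, range_comp_natAdd_eq_compl, h]
  ext i
  induction i using Fin.addCases with
  | left i => exact congrArg Fin.val (congrFun hcast i)
  | right j => exact congrArg Fin.val (congrFun hnat j)

lemma card_compl_eq_of_card_eq {S : Finset (Fin (a + b))} (hS : #S = a) : #Sᶜ = b := by
  simp [card_compl, hS]

noncomputable def shuffleOfFinset (S : Finset (Fin (a + b))) (hS : #S = a) :
    Equiv.Perm (Fin (a + b)) :=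
  finSumFinEquiv.symm.trans <|
    ((S.orderIsoOfFin hS).toEquiv.sumCongr
      ((Sᶜ.orderIsoOfFin (card_compl_eq_of_card_eq hS)).toEquiv.trans
        (Equiv.subtypeEquivRight fun _ => mem_compl))).trans
    (Equiv.sumCompl (· ∈ S))

lemma shuffleOfFinset_castAdd (S : Finset (Fin (a + b))) (hS : #S = a) (i : Fin a) :
    shuffleOfFinset S hS (Fin.castAdd b i) = S.orderEmbOfFin hS i := by
  simp [shuffleOfFinset]

lemma shuffleOfFinset_natAdd (S : Finset (Fin (a + b))) (hS : #S = a) (j : Fin b) :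
    shuffleOfFinset S hS (Fin.natAdd a j) =
      Sᶜ.orderEmbOfFin (card_compl_eq_of_card_eq hS) j := by
  simp [shuffleOfFinset]

lemma shuffleOfFinset_mem_shuffles (S : Finset (Fin (a + b))) (hS : #S = a) :
    shuffleOfFinset S hS ∈ shuffles a b := by
  rw [mem_shuffles]
  constructor
  · intro i j hij
    simpa [shuffleOfFinset_castAdd] using (S.orderEmbOfFin hS).strictMono hij
  · intro i j hij
    simpa [shuffleOfFinset_natAdd] using
      (Sᶜ.orderEmbOfFin (card_compl_eq_of_card_eq hS)).strictMono hij

lemma card_shuffles (a b : ℕ) : #(shuffles a b) = (a + b).choose a := by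
  suffices #(shuffles a b) = #(powersetCard a (univ : Finset (Fin (a + b)))) by simpa
  refine card_bij (fun σ _ ↦ univ.image (σ ∘ Fin.castAdd b)) (fun σ hσ ↦ ?_)
    (fun σ hσ τ hτ h ↦ ?_) (fun S hS ↦ ?_)
  · rw [mem_powersetCard_univ, card_image_of_injective _ (mem_shuffles.mp hσ).1.injective,
      card_univ, Fintype.card_fin]
  · refine eq_of_mem_shuffles_of_range_castAdd_eq hσ hτ ?_
    simpa [Function.comp_def] using congrArg (fun S : Finset _ ↦ (S : Set (Fin (a + b)))) h
  · rw [mem_powersetCard_univ] at hS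
    refine ⟨shuffleOfFinset S hS, shuffleOfFinset_mem_shuffles S hS, ?_⟩
    rw [← coe_inj]
    simp [Function.comp_def, shuffleOfFinset_castAdd]

end Shuffles

section TensorPowerOfRing

variable (R : Type*) [CommRing R]

lemma permMap_self {n : ℕ} (σ : Equiv.Perm (Fin n)) :
    permMap R R σ = LinearEquiv.refl R _ := by
  apply LinearEquiv.toLinearMap_injective
  ext
  simp [permMap]
  rfl

lemma gammaSub_self_eq_top (n : ℕ) : GammaSub R R n = ⊤ := by
  simp [GammaSub, permMap_self]

lemma span_tprod_one_eq_top (n : ℕ) :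
    Submodule.span R {tprod R fun _ : Fin n ↦ (1 : R)} = ⊤ := by
  refine eq_top_iff.mpr fun x _ ↦
    Submodule.mem_span_singleton.mpr ⟨constantBaseRingEquiv (Fin n) R x, ?_⟩
  conv_rhs => rw [← (constantBaseRingEquiv (Fin n) R).symm_apply_apply x]
  rw [constantBaseRingEquiv_symm, Algebra.algebraMap_eq_smul_one]
  rfl

lemma shuffleMul_tprod_one (a b : ℕ) :
    shuffleMul R R a b ((tprod R fun _ ↦ (1 : R)) ⊗ₜ tprod R fun _ ↦ 1) =
      #(shuffles a b) • tprod R fun _ ↦ (1 : R) := by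
  rw [shuffleMul, LinearMap.sum_apply]
  simp only [permMap_self, LinearEquiv.refl_toLinearMap, LinearMap.id_comp, LinearMap.comp_apply,
    LinearEquiv.coe_coe, tmulEquiv_apply, Sum.elim_lam_const_lam_const, reindex_tprod, sum_const]

lemma mulInto_tprod_one (s k : ℕ) (hk : k ≤ s) :
    mulInto R s k hk (tprod R fun _ ↦ 1) (tprod R fun _ ↦ 1) =
      (s.choose k : R) • tprod R fun _ ↦ (1 : R) := by
  simp only [mulInto, TensorProduct.curry_apply, LinearMap.comp_apply, LinearEquiv.coe_coe,
    shuffleMul_tprod_one, card_shuffles, map_nsmul, reindex_tprod, Nat.add_sub_cancel' hk]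
  rw [Nat.cast_smul_eq_nsmul]

lemma map_divMulImage (s : ℕ) :
    (divMulImage R s).map (constantBaseRingEquiv (Fin s) R).toLinearMap =
      Ideal.span ((fun k ↦ (s.choose k : R)) '' ↑(Icc 1 (s - 1))) := by
  have hγ (n : ℕ) : GammaSub R R n = Submodule.span R {tprod R fun _ ↦ 1} := by
    rw [gammaSub_self_eq_top, span_tprod_one_eq_top]
  simp only [divMulImage, Submodule.map_iSup, hγ, Submodule.map₂_span_span, Set.image2_singleton,
    mulInto_tprod_one, Submodule.map_span, Set.image_singleton, map_smul,
    AlgEquiv.toLinearMap_apply, constantBaseRingEquiv_tprod, prod_const_one, smul_eq_mul, mul_one]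
  refine le_antisymm (iSup₂_le fun k hk ↦ Ideal.span_mono ?_) (Ideal.span_le.mpr ?_)
  · exact Set.singleton_subset_iff.mpr ⟨k, by rw [coe_Icc, Set.mem_Icc]; omega, rfl⟩
  · rintro _ ⟨k, hk, rfl⟩
    rw [coe_Icc, Set.mem_Icc] at hk
    exact Submodule.mem_iSup_of_mem ⟨k, by omega⟩ <|
      Submodule.mem_iSup_of_mem (show 0 < k ∧ k < s by omega)
        (Submodule.mem_span_singleton_self _)

end TensorPowerOfRing

section Cokernel

variable (R : Type*) [CommRing R]

noncomputable def divMulCokerEquiv (s : ℕ) :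
    divMulCoker R s ≃ₗ[R] R ⧸ Ideal.span {(((Icc 1 (s - 1)).gcd s.choose : ℕ) : R)} :=
  Submodule.Quotient.equiv _ (divMulImage R s)
      ((LinearEquiv.ofEq _ _ (gammaSub_self_eq_top R s)).trans Submodule.topEquiv)
      ((Submodule.map_comap_subtype _ _).trans (by rw [gammaSub_self_eq_top, top_inf_eq])) ≪≫ₗ
    Submodule.Quotient.equiv _ _ (constantBaseRingEquiv (Fin s) R).toLinearEquiv
      ((map_divMulImage R s).trans (Ideal.span_natCast_image_eq_span_gcd _ _))

end Cokernel

/-- For `s ≥ 2`: if `s` is not a prime power, the cokernel of the divided-power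
multiplication map `⊕_{0<k<s} Γ^k(R) ⊗ Γ^{s-k}(R) → Γ^s(R)` is zero, and if `s = p^r` for
a prime `p` (with `r ≥ 1`), this cokernel is isomorphic to `R/pR`. -/
theorem divMulCoker_classification (R : Type*) [CommRing R] (s : ℕ) (hs : 2 ≤ s) :
    ((¬ ∃ p r : ℕ, Nat.Prime p ∧ s = p ^ r) → Subsingleton (divMulCoker R s)) ∧
    (∀ p r : ℕ, Nat.Prime p → 0 < r → s = p ^ r →
      Nonempty ((divMulCoker R s) ≃ₗ[R] R ⧸ (Ideal.span {(p : R)}))) := by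
  refine ⟨fun hs_not_pow ↦ ?_, fun p r hp hr hs_pow ↦ ?_⟩
  · have hgcd : (Icc 1 (s - 1)).gcd s.choose = 1 :=
      Choose.gcd_choose_eq_one_of_not_isPrimePow hs fun ⟨p, r, hp, _, hpr⟩ ↦
        hs_not_pow ⟨p, r, hp.nat_prime, hpr.symm⟩
    have : Subsingleton (R ⧸ Ideal.span {(((Icc 1 (s - 1)).gcd s.choose : ℕ) : R)}) := by
      rw [Submodule.Quotient.subsingleton_iff, hgcd, Nat.cast_one, Ideal.span_singleton_one]
    exact (divMulCokerEquiv R s).toEquiv.subsingleton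
  · have hgcd : (Icc 1 (s - 1)).gcd s.choose = p := by
      have hs_primePow : IsPrimePow s := (isPrimePow_nat_iff s).mpr ⟨p, r, hp, hr, hs_pow.symm⟩
      rw [Choose.gcd_choose_eq_minFac_of_isPrimePow hs_primePow, hs_pow, hp.pow_minFac hr.ne']
    exact ⟨divMulCokerEquiv R s ≪≫ₗ Submodule.quotEquivOfEq _ _ (by rw [hgcd])⟩
end
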